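/- arXiv:1405.0090 — 5 statements merged into one kernel-verified Lean document; each statement's English description precedes it below -/
import Mathlib

section
/- If G is a perfect group and H is a group with a surjective homomorphism f : H → G whose kernel is contained in the hypercenter of H, then H = L * Z where L is the last term of the derived series of H (the perfect core), Z is the hypercenter of H, and [L, Z] = 1 (i.e., H is a central product of its perfect core and its hypercenter). -/
/-!
Let `L` be the perfect core and `Z = ⨆ n, Zₙ` the hypercenter of `H`. The image of `L` under `f`
is the last term of the derived series of the perfect group `G`, i.e. all of `G`; hence
`H = L ⊔ ker f = L ⊔ Z`. A perfect subgroup `P` centralizes each `Zₙ`: inductively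
`⁅⁅P, Zₙ₊₁⁆, P⁆ ≤ ⁅Zₙ, P⁆ = ⊥`, so the three subgroups lemma gives
`⁅P, Zₙ₊₁⁆ = ⁅⁅P, P⁆, Zₙ₊₁⁆ = ⊥`.
-/

open Group

namespace Subgroup

variable {H G : Type*} [Group H] [Group G]

theorem commutator_upperCentralSeries_succ_le (K : Subgroup H) (n : ℕ) :
    ⁅upperCentralSeries H (n + 1), K⁆ ≤ upperCentralSeries H n :=
  (commutator_mono le_rfl le_top).trans (commutator_upperCentralSeries_top_le H n)

theorem commutator_upperCentralSeries_eq_bot_of_isPerfect (P : Subgroup H) [IsPerfect P] :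
    ∀ n, ⁅P, upperCentralSeries H n⁆ = ⊥
  | 0 => commutator_bot_right P
  | n + 1 => by
    have ih := commutator_upperCentralSeries_eq_bot_of_isPerfect P n
    have hZP : ⁅⁅upperCentralSeries H (n + 1), P⁆, P⁆ = ⊥ := by
      rw [eq_bot_iff, ← ih, commutator_comm P]
      exact commutator_mono (commutator_upperCentralSeries_succ_le P n) le_rfl
    have hPZ : ⁅⁅P, upperCentralSeries H (n + 1)⁆, P⁆ = ⊥ := by
      rwa [commutator_comm P]
    simpa only [commutator_eq_self] using commutator_commutator_eq_bot_of_rotate hPZ hZP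

theorem commutator_iSup_upperCentralSeries_eq_bot_of_isPerfect (P : Subgroup H) [IsPerfect P] :
    ⁅P, ⨆ n, upperCentralSeries H n⁆ = ⊥ := by
  rw [eq_bot_iff, commutator_le]
  intro p hp z hz
  obtain ⟨n, hzn⟩ := (mem_iSup_of_directed (upperCentralSeries_mono H).directed_le).mp hz
  rw [← commutator_upperCentralSeries_eq_bot_of_isPerfect P n]
  exact commutator_mem_commutator hp hzn

theorem exists_iInf_derivedSeries_eq [WellFoundedLT (Subgroup H)] :
    ∃ M, ∀ m, M ≤ m → ⨅ n, derivedSeries H n = derivedSeries H m := by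
  obtain ⟨M, hM⟩ := WellFoundedLT.antitone_chain_condition (derivedSeries_antitone H)
  refine ⟨M, fun m hm => le_antisymm (iInf_le _ m) (le_iInf fun n => ?_)⟩
  rcases le_total n m with hnm | hmn
  · exact derivedSeries_antitone H hnm
  · rw [← hM m hm, hM n (hm.trans hmn)]

instance isPerfect_iInf_derivedSeries [WellFoundedLT (Subgroup H)] :
    IsPerfect (⨅ n, derivedSeries H n : Subgroup H) := by
  obtain ⟨M, hM⟩ := exists_iInf_derivedSeries_eq (H := H)
  rw [isPerfect_iff, hM M le_rfl, ← derivedSeries_succ, ← hM (M + 1) M.le_succ, hM M le_rfl]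

theorem derivedSeries_sup_ker_eq_top [IsPerfect G] {f : H →* G} (hf : Function.Surjective f)
    (n : ℕ) : derivedSeries H n ⊔ f.ker = ⊤ := by
  rw [← comap_map_eq, map_derivedSeries_eq hf, IsPerfect.derivedSeries_eq_top, comap_top]

end Subgroup

/-- If `G` is perfect, `f : H → G` is surjective with kernel in the hypercenter of the
finite group `H`, then `H` is the central product of its perfect core `L` (the terminal
member of the derived series, here `⨅ n, derivedSeries H n`) and its hypercenter `Z`
(the terminal member of the upper central series, here `⨆ n, upperCentralSeries H n`):
`L ⊔ Z = ⊤` and `⁅L, Z⁆ = ⊥`. -/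
theorem stmt_0 {H G : Type*} [Group H] [Finite H] [Group G]
    (hG : ⁅(⊤ : Subgroup G), (⊤ : Subgroup G)⁆ = ⊤)
    (f : H →* G) (hf : Function.Surjective f)
    (hker : f.ker ≤ ⨆ n, upperCentralSeries H n) :
    (⨅ n, derivedSeries H n) ⊔ (⨆ n, upperCentralSeries H n) = ⊤ ∧
    ⁅(⨅ n, derivedSeries H n), (⨆ n, upperCentralSeries H n)⁆ = ⊥ := by
  have : IsPerfect G := isPerfect_def.mpr hG
  obtain ⟨M, hM⟩ := Subgroup.exists_iInf_derivedSeries_eq (H := H)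
  refine ⟨?_, Subgroup.commutator_iSup_upperCentralSeries_eq_bot_of_isPerfect _⟩
  rw [eq_top_iff, ← Subgroup.derivedSeries_sup_ker_eq_top hf M, ← hM M le_rfl]
  exact sup_le_sup_left hker _
end

section
/- In a finite group G, for any subgroup H, the intersection of all subnormal subgroups of G containing H is itself a subnormal subgroup of G containing H (the subnormal closure of H exists). -/
/-!
Subnormality in the chain sense agrees with Mathlib's `Subgroup.IsSubnormal`, which is closed
under binary intersections. A finite group has only finitely many subgroups, so the intersection
of all subnormal subgroups containing `H` is a finite intersection, hence subnormal.
-/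

/-- A subgroup `H` of `G` is subnormal if there is a finite chain
`H = c 0 ≤ c 1 ≤ ... ≤ c n = ⊤` with each term normal in the next. -/
def IsSubnormal {G : Type*} [Group G] (H : Subgroup G) : Prop :=
  ∃ (n : ℕ) (c : ℕ → Subgroup G), c 0 = H ∧ c n = ⊤ ∧
    ∀ i < n, c i ≤ c (i + 1) ∧ ((c i).subgroupOf (c (i + 1))).Normal

theorem Subgroup.IsSubnormal.sInf_of_finite {G : Type*} [Group G] {S : Set (Subgroup G)}
    (hS : S.Finite) (h : ∀ K ∈ S, K.IsSubnormal) : (sInf S).IsSubnormal := by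
  induction S, hS using Set.Finite.induction_on with
  | empty => simp
  | insert _ _ ih =>
    rw [sInf_insert]
    exact (h _ (Set.mem_insert _ _)).inf (ih fun K hK => h K (Set.mem_insert_of_mem _ hK))

theorem isSubnormal_iff_subgroup_isSubnormal {G : Type*} [Group G] {H : Subgroup G} :
    IsSubnormal H ↔ H.IsSubnormal := by
  constructor
  · rintro ⟨n, c, rfl, hcn, hc⟩
    have key : ∀ k ≤ n, (c k).IsSubnormal := fun k hk => by
      induction hk using Nat.decreasingInduction with
      | self => exact hcn ▸ Subgroup.IsSubnormal.top
      | of_succ k hk ih => exact .step _ _ (hc k hk).1 ih (hc k hk).2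
    exact key 0 n.zero_le
  · intro h
    obtain ⟨n, f, hf, hnormal, hf0, hfn⟩ := Subgroup.IsSubnormal.isSubnormal_iff.mp h
    exact ⟨n, f, hf0, hfn, fun i _ => ⟨hf i.le_succ, hnormal i⟩⟩

/-- In a finite group, the intersection of all subnormal subgroups containing `H`
is itself a subnormal subgroup containing `H` (the subnormal closure exists). -/
theorem stmt_3 {G : Type*} [Group G] [Finite G] (H : Subgroup G) :
    H ≤ sInf {K : Subgroup G | H ≤ K ∧ IsSubnormal K} ∧
    IsSubnormal (sInf {K : Subgroup G | H ≤ K ∧ IsSubnormal K}) :=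
  ⟨le_sInf fun _ hK => hK.1,
    isSubnormal_iff_subgroup_isSubnormal.mpr <|
      Subgroup.IsSubnormal.sInf_of_finite (Set.toFinite _)
        fun _ hK => isSubnormal_iff_subgroup_isSubnormal.mp hK.2⟩
end

section
/- Let G be a perfect group, H a group with a surjective homomorphism onto G whose kernel lies in the hypercenter Z_∞(H), and suppose H is finite. If the nilpotent residual quotient H/γ_∞(H) has nilpotency class at most c, then the hypercenter Z_∞(H) has nilpotency class at most c + 1. -/
/-!
Induction on `m` with the three subgroups lemma gives `⁅γ_m(H), Z_{n+m}(H)⁆ ≤ Z_n(H)`, so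
`γ_n(H)` centralizes `Z_n(H)`. The stable term `γ_∞ = γ_t` lies in every `γ_n`, hence centralizes
the whole hypercenter `Z_∞`. Since `H/γ_∞` has class at most `c`, `γ_c(H) ≤ γ_∞`, and therefore
`γ_{c+1}(Z_∞) ≤ ⁅γ_c(H), Z_∞⁆ = 1`.
-/

namespace Subgroup

variable {G : Type*} [Group G]

theorem commutator_commutator_le_of_rotate {H₁ H₂ H₃ N : Subgroup G} [N.Normal]
    (h1 : ⁅⁅H₂, H₃⁆, H₁⁆ ≤ N) (h2 : ⁅⁅H₃, H₁⁆, H₂⁆ ≤ N) : ⁅⁅H₁, H₂⁆, H₃⁆ ≤ N := by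
  simp only [← QuotientGroup.ker_mk' N, ← map_eq_bot_iff, map_commutator] at h1 h2 ⊢
  exact commutator_commutator_eq_bot_of_rotate h1 h2

theorem commutator_lowerCentralSeries_upperCentralSeries_le (m n : ℕ) :
    ⁅lowerCentralSeries (⊤ : Subgroup G) m, upperCentralSeries G (n + m)⁆ ≤
      upperCentralSeries G n := by
  induction m generalizing n with
  | zero => exact commutator_le_right _ _
  | succ m ih =>
    rw [lowerCentralSeries_succ]
    apply commutator_commutator_le_of_rotate
    · calc ⁅⁅⊤, upperCentralSeries G (n + (m + 1))⁆, lowerCentralSeries ⊤ m⁆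
            ≤ ⁅upperCentralSeries G (n + m), lowerCentralSeries ⊤ m⁆ := by
              rw [commutator_comm ⊤]
              exact commutator_mono (commutator_upperCentralSeries_top_le G _) le_rfl
          _ ≤ upperCentralSeries G n := by rw [commutator_comm]; exact ih n
    · calc ⁅⁅upperCentralSeries G (n + (m + 1)), lowerCentralSeries ⊤ m⁆, ⊤⁆
            ≤ ⁅upperCentralSeries G (n + 1), ⊤⁆ := by
              rw [commutator_comm _ (lowerCentralSeries ⊤ m), ← Nat.add_assoc,
                Nat.add_right_comm n m 1]
              exact commutator_mono (ih (n + 1)) le_rfl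
          _ ≤ upperCentralSeries G n := commutator_upperCentralSeries_top_le G n

theorem commutator_lowerCentralSeries_upperCentralSeries_eq_bot (n : ℕ) :
    ⁅lowerCentralSeries (⊤ : Subgroup G) n, upperCentralSeries G n⁆ = ⊥ := by
  simpa using commutator_lowerCentralSeries_upperCentralSeries_le (G := G) n 0

theorem commutator_lowerCentralSeries_iSup_upperCentralSeries_eq_bot {t : ℕ}
    (ht : ∀ s ≥ t, lowerCentralSeries (⊤ : Subgroup G) s = lowerCentralSeries ⊤ t) :
    ⁅lowerCentralSeries (⊤ : Subgroup G) t, ⨆ n, upperCentralSeries G n⁆ = ⊥ := by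
  rw [commutator_comm, commutator_eq_bot_iff_le_centralizer]
  refine iSup_le fun n => commutator_eq_bot_iff_le_centralizer.mp ?_
  rw [eq_bot_iff, commutator_comm, ← commutator_lowerCentralSeries_upperCentralSeries_eq_bot n,
    ← ht (t + n) (Nat.le_add_right t n)]
  exact commutator_mono (lowerCentralSeries_antitone _ (Nat.le_add_left n t)) le_rfl

theorem lowerCentralSeries_le_of_lowerCentralSeries_quotient_eq_bot {N : Subgroup G} [N.Normal]
    {c : ℕ} (hc : lowerCentralSeries (⊤ : Subgroup (G ⧸ N)) c = ⊥) :
    lowerCentralSeries (⊤ : Subgroup G) c ≤ N := by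
  rw [← QuotientGroup.ker_mk' N, ← map_eq_bot_iff, map_lowerCentralSeries,
    map_top_of_surjective _ (QuotientGroup.mk'_surjective N), hc]

theorem top_lowerCentralSeries_succ_eq_bot_of_commutator_eq_bot {Z : Subgroup G} {c : ℕ}
    (hc : ⁅lowerCentralSeries (⊤ : Subgroup G) c, Z⁆ = ⊥) :
    lowerCentralSeries (⊤ : Subgroup Z) (c + 1) = ⊥ := by
  rw [← map_eq_bot_iff_of_injective _ Z.subtype_injective, top_subtype_lowerCentralSeries,
    lowerCentralSeries_succ, eq_bot_iff, ← hc]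
  exact commutator_mono (lowerCentralSeries_mono c le_top) le_rfl

end Subgroup

theorem stmt_10_general {H : Type*} [Group H]
    (t : ℕ) (ht : ∀ s ≥ t, Subgroup.lowerCentralSeries (⊤ : Subgroup H) s = Subgroup.lowerCentralSeries (⊤ : Subgroup H) t)
    (c : ℕ) (hc : Subgroup.lowerCentralSeries (⊤ : Subgroup (H ⧸ Subgroup.lowerCentralSeries (⊤ : Subgroup H) t)) c = ⊥) :
    Subgroup.lowerCentralSeries (⊤ : Subgroup (↥(⨆ n, upperCentralSeries H n))) (c + 1) = ⊥ := by
  apply Subgroup.top_lowerCentralSeries_succ_eq_bot_of_commutator_eq_bot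
  rw [eq_bot_iff, ← Subgroup.commutator_lowerCentralSeries_iSup_upperCentralSeries_eq_bot ht]
  exact Subgroup.commutator_mono
    (Subgroup.lowerCentralSeries_le_of_lowerCentralSeries_quotient_eq_bot hc) le_rfl

/-- Let `G` be perfect, `H` finite with a surjection `f : H → G` whose kernel lies in the
hypercenter `Z_∞(H) = ⨆ n, upperCentralSeries H n`. If the nilpotent residual quotient
`H/γ_∞(H)` has nilpotency class at most `c` (where `γ_∞(H) = lowerCentralSeries H t` is
the terminal member of the lower central series), then the hypercenter of `H` is
nilpotent of class at most `c + 1`. -/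
theorem stmt_10 {H G : Type*} [Group H] [Finite H] [Group G]
    (hG : ⁅(⊤ : Subgroup G), (⊤ : Subgroup G)⁆ = ⊤)
    (f : H →* G) (hf : Function.Surjective f)
    (hker : f.ker ≤ ⨆ n, upperCentralSeries H n)
    (t : ℕ) (ht : ∀ s ≥ t, Subgroup.lowerCentralSeries (⊤ : Subgroup H) s = Subgroup.lowerCentralSeries (⊤ : Subgroup H) t)
    (c : ℕ) (hc : Subgroup.lowerCentralSeries (⊤ : Subgroup (H ⧸ Subgroup.lowerCentralSeries (⊤ : Subgroup H) t)) c = ⊥) :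
    Subgroup.lowerCentralSeries (⊤ : Subgroup (↥(⨆ n, upperCentralSeries H n))) (c + 1) = ⊥ :=
  stmt_10_general t ht c hc
end

section
/- If f : A → B and g : B → C are surjective group homomorphisms with ker f ≤ Z(A), ker g ≤ Z(B), and A is perfect, then ker(g ∘ f) ≤ Z(A); i.e., the composition of central extensions of a perfect group is a central extension. -/
/-!
If `f z` is central, every commutator `⁅z, a⁆` lies in `ker f`, hence in `Z(A)`; so `z` lies in
the second term of the upper central series of `A`, which for a perfect group is `Z(A)` itself
(Grün's lemma).
-/

open scoped commutatorElement

namespace Group.IsPerfect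

variable {G : Type*} [Group G] [IsPerfect G]

theorem mem_center_of_forall_commutatorElement_mem_center {z : G}
    (hz : ∀ g : G, ⁅z, g⁆ ∈ Subgroup.center G) : z ∈ Subgroup.center G := by
  rw [← upperCentralSeries_eq_center G two_ne_zero, Subgroup.mem_upperCentralSeries_succ_iff]
  simpa only [Subgroup.upperCentralSeries_one] using hz

end Group.IsPerfect

theorem MonoidHom.mem_center_of_map_mem_center {A B : Type*} [Group A] [Group B]
    [Group.IsPerfect A] (f : A →* B) (hkf : f.ker ≤ Subgroup.center A) {z : A}
    (hz : f z ∈ Subgroup.center B) : z ∈ Subgroup.center A :=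
  Group.IsPerfect.mem_center_of_forall_commutatorElement_mem_center fun a ↦ hkf <| by
    rw [MonoidHom.mem_ker, map_commutatorElement,
      commutatorElement_eq_one_iff_mul_comm, (Subgroup.mem_center_iff.mp hz (f a)).symm]

theorem stmt_14_general {A B C : Type*} [Group A] [Group B] [Group C]
    (f : A →* B) (g : B →* C)
    (hkf : f.ker ≤ Subgroup.center A) (hkg : g.ker ≤ Subgroup.center B)
    (hperf : ⁅(⊤ : Subgroup A), (⊤ : Subgroup A)⁆ = ⊤) :
    (g.comp f).ker ≤ Subgroup.center A := by
  have : Group.IsPerfect A := ⟨hperf⟩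
  intro z hz
  exact f.mem_center_of_map_mem_center hkf (hkg hz)

/-- The composition of central extensions of a perfect group is a central extension:
if `f : A → B` and `g : B → C` are surjective with `ker f ≤ Z(A)`, `ker g ≤ Z(B)`,
and `A` is perfect, then `ker (g ∘ f) ≤ Z(A)`. -/
theorem stmt_14 {A B C : Type*} [Group A] [Group B] [Group C]
    (f : A →* B) (g : B →* C)
    (hf : Function.Surjective f) (hg : Function.Surjective g)
    (hkf : f.ker ≤ Subgroup.center A) (hkg : g.ker ≤ Subgroup.center B)
    (hperf : ⁅(⊤ : Subgroup A), (⊤ : Subgroup A)⁆ = ⊤) :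
    (g.comp f).ker ≤ Subgroup.center A :=
  stmt_14_general f g hkf hkg hperf
end

section
/- Let φ : Γ → G be a homomorphism of groups where Γ is finite. If K = ker φ is contained in Z_n(Γ) for some n, and φ(Γ) is subnormal in G, then Γ/𝒦 ≅ Γ where 𝒦 is the terminal member of the series K_1 = K, K_{i+1} = [Γ, K_i]; in particular 𝒦 = 1. -/
namespace Subgroup

variable {G : Type*} [Group G]

theorem commutator_top_upperCentralSeries_le_pred (k : ℕ) :
    ⁅(⊤ : Subgroup G), upperCentralSeries G k⁆ ≤ upperCentralSeries G (k - 1) := by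
  cases k with
  | zero => simp
  | succ k =>
    rw [commutator_comm]
    exact commutator_upperCentralSeries_top_le G k

theorem le_upperCentralSeries_sub_of_le_commutator_top {K : ℕ → Subgroup G} {n : ℕ}
    (hK : ∀ i, K (i + 1) ≤ ⁅(⊤ : Subgroup G), K i⁆) (h0 : K 0 ≤ upperCentralSeries G n) (i : ℕ) :
    K i ≤ upperCentralSeries G (n - i) := by
  induction i with
  | zero => exact h0
  | succ i ih =>
    calc K (i + 1) ≤ ⁅⊤, K i⁆ := hK i
      _ ≤ ⁅⊤, upperCentralSeries G (n - i)⁆ := commutator_mono le_rfl ih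
      _ ≤ upperCentralSeries G (n - (i + 1)) :=
        Nat.sub_add_eq n i 1 ▸ commutator_top_upperCentralSeries_le_pred (n - i)

theorem eq_bot_of_le_commutator_top_of_le_upperCentralSeries {K : ℕ → Subgroup G} {n m : ℕ}
    (hK : ∀ i, K (i + 1) ≤ ⁅(⊤ : Subgroup G), K i⁆) (h0 : K 0 ≤ upperCentralSeries G n)
    (hm : n ≤ m) :
    K m = ⊥ := by
  have := le_upperCentralSeries_sub_of_le_commutator_top hK h0 m
  rwa [Nat.sub_eq_zero_of_le hm, upperCentralSeries_zero, le_bot_iff] at this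

end Subgroup

theorem stmt_18_general {Γ G : Type*} [Group Γ] [Group G] (φ : Γ →* G)
    (n : ℕ) (hker : φ.ker ≤ upperCentralSeries Γ n)
    (Kser : ℕ → Subgroup Γ) (h0 : Kser 0 = φ.ker)
    (hs : ∀ i, Kser (i + 1) = ⁅(⊤ : Subgroup Γ), Kser i⁆)
    (t : ℕ) (ht : ∀ s ≥ t, Kser s = Kser t) :
    Kser t = ⊥ ∧
    Nonempty ((Γ ⧸ Subgroup.normalClosure ((Kser t : Subgroup Γ) : Set Γ)) ≃* Γ) := by
  have hbot : Kser t = ⊥ := by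
    rw [← ht (t + n) (Nat.le_add_right t n)]
    exact Subgroup.eq_bot_of_le_commutator_top_of_le_upperCentralSeries (fun i => (hs i).le)
      (h0 ▸ hker) (Nat.le_add_left n t)
  have hclosure : Subgroup.normalClosure ((Kser t : Subgroup Γ) : Set Γ) = ⊥ :=
    Subgroup.normalClosure_eq_bot_iff.mpr (by simp [hbot])
  exact ⟨hbot, ⟨(QuotientGroup.quotientMulEquivOfEq hclosure).trans QuotientGroup.quotientBot⟩⟩

/-- Let `φ : Γ → G` with `Γ` finite, `K = ker φ ≤ Z_n(Γ)` and `φ(Γ)` subnormal in `G`.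
If `𝒦 = Kser t` is the terminal member of the series `K₁ = K`, `K_{i+1} = ⁅Γ, K_i⁆`,
then `𝒦 = 1` and `Γ/𝒦 ≅ Γ`. (As `𝒦` is normal, `normalClosure 𝒦 = 𝒦`.) -/
theorem stmt_18 {Γ G : Type*} [Group Γ] [Finite Γ] [Group G] (φ : Γ →* G)
    (n : ℕ) (hker : φ.ker ≤ upperCentralSeries Γ n)
    (hrange : IsSubnormal φ.range)
    (Kser : ℕ → Subgroup Γ) (h0 : Kser 0 = φ.ker)
    (hs : ∀ i, Kser (i + 1) = ⁅(⊤ : Subgroup Γ), Kser i⁆)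
    (t : ℕ) (ht : ∀ s ≥ t, Kser s = Kser t) :
    Kser t = ⊥ ∧
    Nonempty ((Γ ⧸ Subgroup.normalClosure ((Kser t : Subgroup Γ) : Set Γ)) ≃* Γ) :=
  stmt_18_general φ n hker Kser h0 hs t ht
end
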